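/- arXiv:1904.13056 — 3 statements merged into one kernel-verified Lean document; each statement's English description precedes it below -/
import Mathlib

section
/- (Min-entropy version of Vazirani's Lemma) Let t ≥ 1 be an integer and let Z be a random variable taking values in {0,1}^m. If for every set S ⊆ [m] with |S| ≥ t it holds that bias(⊕_{i∈S} Z_i) ≤ (2m)^{-|S|}, then the min-entropy of Z is at least m - t·log₂(m) - 1, i.e., for every z ∈ {0,1}^m, Pr[Z = z] ≤ 2^{-(m - t·log₂ m - 1)}. -/
/-!
Write `χ_S(x) = (-1)^{|{i ∈ S | x_i}|}` for the characters of `{0,1}^m`, so that the bias of the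
parity over `S` is the Fourier coefficient `μ̂(S) = ∑ₓ μ(x) χ_S(x)`. Orthogonality of the characters
gives the inversion formula `2^m μ(z) = ∑_S χ_S(z) μ̂(S)`, hence `2^m μ(z) ≤ ∑_S |μ̂(S)|`. There are
at most `m^j` sets of size `j`; those with `j < t` contribute at most `1` each, in total less than
`m^t`, and those with `j ≥ t` contribute at most `m^j (2m)^{-j} = 2^{-j}`, in total at most `2`.
So `μ(z) ≤ 2 m^t / 2^m = 2^{-(m - t log₂ m - 1)}` for `m ≥ 2`; for `m ≤ 1` the right-hand side is
at least `1` (Mathlib's `logb 2 0 = 0`).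
-/

open Finset
open scoped Classical

namespace BooleanCube

variable {ι : Type*}

noncomputable def walsh (S : Finset ι) (x : ι → Bool) : ℝ :=
  (-1) ^ (S.filter (fun i => x i = true)).card

lemma walsh_eq_prod (S : Finset ι) (x : ι → Bool) :
    walsh S x = ∏ i ∈ S, if x i = true then -1 else 1 := by
  rw [prod_ite, prod_const, prod_const, one_pow, mul_one, walsh]

lemma abs_walsh (S : Finset ι) (x : ι → Bool) : |walsh S x| = 1 := by
  simp [walsh]

variable [Fintype ι]

lemma sum_walsh_mul_walsh (x z : ι → Bool) :
    ∑ S, walsh S x * walsh S z = if x = z then 2 ^ Fintype.card ι else 0 := by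
  have hprod : ∀ S, walsh S x * walsh S z = ∏ i ∈ S, if x i = z i then 1 else -1 := by
    intro S
    rw [walsh_eq_prod, walsh_eq_prod, ← prod_mul_distrib]
    refine prod_congr rfl fun i _ => ?_
    cases x i <;> cases z i <;> norm_num
  rw [sum_congr rfl fun S _ => hprod S, ← powerset_univ, ← prod_add_one]
  split_ifs with hxz
  · simp [hxz, one_add_one_eq_two]
  · obtain ⟨i, hi⟩ := Function.ne_iff.mp hxz
    exact prod_eq_zero (mem_univ i) (by simp [hi])

variable [DecidableEq ι]

noncomputable def walshCoeff (μ : (ι → Bool) → ℝ) (S : Finset ι) : ℝ :=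
  ∑ x, μ x * walsh S x

lemma walshCoeff_eq_sub (μ : (ι → Bool) → ℝ) (S : Finset ι) :
    walshCoeff μ S =
      (∑ x ∈ univ.filter (fun x => (S.filter (fun i => x i = true)).card % 2 = 0), μ x)
        - ∑ x ∈ univ.filter (fun x => (S.filter (fun i => x i = true)).card % 2 = 1), μ x := by
  have hterm : ∀ x, μ x * walsh S x =
      if (S.filter (fun i => x i = true)).card % 2 = 0 then μ x else -μ x := by
    intro x
    rw [walsh, neg_one_pow_eq_pow_mod_two]
    rcases Nat.mod_two_eq_zero_or_one (S.filter (fun i => x i = true)).card with h | h <;> simp [h]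
  simp only [walshCoeff, hterm, sum_ite, sum_neg_distrib, Nat.mod_two_ne_zero, sub_eq_add_neg]

lemma abs_walshCoeff_le (μ : (ι → Bool) → ℝ) (S : Finset ι) :
    |walshCoeff μ S| ≤ ∑ x, |μ x| :=
  (abs_sum_le_sum_abs _ _).trans_eq (by simp [abs_mul, abs_walsh])

lemma pow_card_mul_eq_sum_walsh_mul_walshCoeff (μ : (ι → Bool) → ℝ) (z : ι → Bool) :
    2 ^ Fintype.card ι * μ z = ∑ S, walsh S z * walshCoeff μ S := by
  symm
  calc ∑ S, walsh S z * walshCoeff μ S = ∑ x, μ x * ∑ S, walsh S x * walsh S z := by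
        simp only [walshCoeff, mul_sum]
        rw [sum_comm]
        exact sum_congr rfl fun _ _ => sum_congr rfl fun _ _ => by ring
    _ = 2 ^ Fintype.card ι * μ z := by simp [sum_walsh_mul_walsh, mul_comm]

lemma pow_card_mul_le_sum_abs_walshCoeff (μ : (ι → Bool) → ℝ) (z : ι → Bool) :
    2 ^ Fintype.card ι * μ z ≤ ∑ S, |walshCoeff μ S| := by
  rw [pow_card_mul_eq_sum_walsh_mul_walshCoeff]
  exact (le_abs_self _).trans ((abs_sum_le_sum_abs _ _).trans_eq (by simp [abs_mul, abs_walsh]))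

end BooleanCube

lemma Nat.choose_mul_two_mul_zpow_neg_le {m : ℕ} (hm : 0 < m) (j : ℕ) :
    (m.choose j : ℝ) * (2 * m) ^ (-(j : ℤ)) ≤ (1 / 2) ^ j := by
  calc (m.choose j : ℝ) * (2 * m) ^ (-(j : ℤ)) ≤ (m : ℝ) ^ j * (2 * m) ^ (-(j : ℤ)) := by
        gcongr
        exact_mod_cast Nat.choose_le_pow m j
    _ = (1 / 2) ^ j := by
        rw [zpow_neg, zpow_natCast, mul_pow, one_div, inv_pow]
        field_simp

lemma sum_le_two_mul_card_pow {ι : Type*} [Fintype ι] {c : Finset ι → ℝ} (t : ℕ)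
    (hm : 2 ≤ Fintype.card ι) (hc : ∀ S, c S ≤ 1)
    (hc_large : ∀ S : Finset ι, t ≤ S.card → c S ≤ (2 * Fintype.card ι : ℝ) ^ (-(S.card : ℤ))) :
    ∑ S, c S ≤ 2 * (Fintype.card ι : ℝ) ^ t := by
  set m := Fintype.card ι
  set f : ℕ → ℝ := fun j => if j < t then 1 else (2 * m : ℝ) ^ (-(j : ℤ))
  have hcf : ∀ S : Finset ι, c S ≤ f S.card := by
    intro S
    by_cases hS : S.card < t
    · simpa [f, hS] using hc S
    · simpa [f, hS] using hc_large S (not_lt.mp hS)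
  have hsmall : ∑ j ∈ (range (m + 1)).filter (· < t), (m.choose j : ℝ) ≤ (m : ℝ) ^ t - 1 := by
    have hnat : ∑ j ∈ (range (m + 1)).filter (· < t), m.choose j < m ^ t :=
      (sum_le_sum fun j _ => Nat.choose_le_pow m j).trans_lt
        (Nat.geomSum_lt hm fun j hj => (mem_filter.mp hj).2)
    have hreal : ∑ j ∈ (range (m + 1)).filter (· < t), (m.choose j : ℝ) + 1 ≤ (m : ℝ) ^ t := by
      exact_mod_cast Nat.succ_le_of_lt hnat
    linarith
  have hlarge : ∑ j ∈ (range (m + 1)).filter (¬ · < t),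
      (m.choose j : ℝ) * (2 * m : ℝ) ^ (-(j : ℤ)) ≤ 2 :=
    calc _ ≤ ∑ j ∈ (range (m + 1)).filter (¬ · < t), (1 / 2 : ℝ) ^ j :=
          sum_le_sum fun j _ => Nat.choose_mul_two_mul_zpow_neg_le (by omega) j
      _ ≤ ∑ j ∈ range (m + 1), (1 / 2 : ℝ) ^ j :=
          sum_le_sum_of_subset_of_nonneg (filter_subset _ _) fun _ _ _ => by positivity
      _ ≤ 2 := sum_geometric_two_le _
  have hpow : (1 : ℝ) ≤ (m : ℝ) ^ t := one_le_pow₀ (by exact_mod_cast (by omega : 1 ≤ m))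
  calc ∑ S, c S ≤ ∑ S, f S.card := sum_le_sum fun S _ => hcf S
    _ = ∑ j ∈ range (m + 1), (m.choose j : ℝ) * f j := by
        rw [← powerset_univ, sum_powerset_apply_card, card_univ]
        simp only [nsmul_eq_mul]
        rfl
    _ = (∑ j ∈ (range (m + 1)).filter (· < t), (m.choose j : ℝ))
          + ∑ j ∈ (range (m + 1)).filter (¬ · < t), (m.choose j : ℝ) * (2 * m : ℝ) ^ (-(j : ℤ)) := by
        simp only [f, mul_ite, mul_one]
        rw [sum_ite]
    _ ≤ ((m : ℝ) ^ t - 1) + 2 := add_le_add hsmall hlarge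
    _ ≤ 2 * (m : ℝ) ^ t := by linarith

open BooleanCube in
theorem apply_le_two_mul_card_pow_div_of_abs_walshCoeff_le {ι : Type*} [Fintype ι] [DecidableEq ι]
    {μ : (ι → Bool) → ℝ} (hnn : ∀ x, 0 ≤ μ x) (hsum : ∑ x, μ x = 1)
    (hm : 2 ≤ Fintype.card ι) (t : ℕ)
    (hbias : ∀ S : Finset ι, t ≤ S.card →
      |walshCoeff μ S| ≤ (2 * Fintype.card ι : ℝ) ^ (-(S.card : ℤ)))
    (z : ι → Bool) :
    μ z ≤ 2 * (Fintype.card ι : ℝ) ^ t / 2 ^ Fintype.card ι := by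
  have hcoeff : ∀ S, |walshCoeff μ S| ≤ 1 := fun S =>
    calc |walshCoeff μ S| ≤ ∑ x, |μ x| := abs_walshCoeff_le μ S
      _ = 1 := by simp_rw [abs_of_nonneg (hnn _)]; exact hsum
  rw [le_div_iff₀ (by positivity), mul_comm]
  exact (pow_card_mul_le_sum_abs_walshCoeff μ z).trans (sum_le_two_mul_card_pow t hm hcoeff hbias)

lemma two_rpow_neg_sub_mul_logb_sub_one {x : ℝ} (hx : 0 < x) (n t : ℕ) :
    (2 : ℝ) ^ (-((n : ℝ) - t * Real.logb 2 x - 1)) = 2 * x ^ t / 2 ^ n := by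
  rw [show -((n : ℝ) - t * Real.logb 2 x - 1) = Real.logb 2 x * t + (1 - n) by ring,
    Real.rpow_add two_pos, Real.rpow_mul zero_le_two, Real.rpow_logb two_pos (by norm_num) hx,
    Real.rpow_natCast, Real.rpow_sub two_pos, Real.rpow_one, Real.rpow_natCast]
  ring

theorem stmt_2_general (m t : ℕ) (μ : (Fin m → Bool) → ℝ)
    (hnn : ∀ z, 0 ≤ μ z) (hsum : ∑ z, μ z = 1)
    (hbias : ∀ S : Finset (Fin m), t ≤ S.card →
      |(∑ z ∈ univ.filter (fun z => (S.filter (fun i => z i = true)).card % 2 = 0), μ z)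
        - ∑ z ∈ univ.filter (fun z => (S.filter (fun i => z i = true)).card % 2 = 1), μ z|
        ≤ ((2 * m : ℝ)) ^ (-(S.card : ℤ))) :
    ∀ z, μ z ≤ (2 : ℝ) ^ (-((m : ℝ) - t * Real.logb 2 m - 1)) := by
  intro z
  rcases le_or_gt m 1 with hm | hm
  · have hexp : 0 ≤ -((m : ℝ) - t * Real.logb 2 m - 1) := by interval_cases m <;> simp
    calc μ z ≤ ∑ x, μ x := single_le_sum (fun x _ => hnn x) (mem_univ z)
      _ = 1 := hsum
      _ ≤ _ := Real.one_le_rpow one_le_two hexp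
  · rw [two_rpow_neg_sub_mul_logb_sub_one (by positivity) m t]
    have hcard : Fintype.card (Fin m) = m := Fintype.card_fin m
    have key := apply_le_two_mul_card_pow_div_of_abs_walshCoeff_le hnn hsum (hcard.symm ▸ hm) t
      (fun S hS => by rw [BooleanCube.walshCoeff_eq_sub, hcard]; exact hbias S hS) z
    rwa [hcard] at key

/-- Min-entropy version of Vazirani's lemma. -/
theorem stmt_2 (m t : ℕ) (ht : 1 ≤ t) (μ : (Fin m → Bool) → ℝ)
    (hnn : ∀ z, 0 ≤ μ z) (hsum : ∑ z, μ z = 1)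
    (hbias : ∀ S : Finset (Fin m), t ≤ S.card →
      |(∑ z ∈ univ.filter (fun z => (S.filter (fun i => z i = true)).card % 2 = 0), μ z)
        - ∑ z ∈ univ.filter (fun z => (S.filter (fun i => z i = true)).card % 2 = 1), μ z|
        ≤ ((2 * m : ℝ)) ^ (-(S.card : ℤ))) :
    ∀ z, μ z ≤ (2 : ℝ) ^ (-((m : ℝ) - t * Real.logb 2 m - 1)) :=
  stmt_2_general m t μ hnn hsum hbias
end

section
/- (Sampling property of low-discrepancy gadgets) Let γ, λ > 0, let Λ be a finite set, let g : Λ × Λ → {0,1} satisfy disc(g) ≤ |Λ|^{-η}, and let X, Y be independent random variables over Λ with H_∞(X) + H_∞(Y) ≥ (2 - η + γ + λ)·log₂|Λ| + 1. Then the probability that X takes a value x ∈ Λ such that bias(g(x,Y)) > |Λ|^{-λ} is less than |Λ|^{-γ}. -/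
/-!
Write `ε x y = ±1` for the signed gadget and `f x = E_Y[ε x Y]`, so that `bias(g(x,Y)) = |f x|`.
A weight `w ≤ m` on `β` can be peeled off a sum `∑ w y * h y` by keeping only the `y` with
`h y > 0`, at the cost of a factor `m` and of `sup_B ∑_{y ∈ B} h y`. Peeling off `μY` bounds
`|∑_{x ∈ A} f x|` by `2^{-kY} |Λ|^{2-η}` for every `A`; peeling off `μX`, once for each sign of
`f`, bounds `E_X |f X|` by `2 · 2^{-kX-kY} |Λ|^{2-η}`, which the entropy hypothesis makes at most
`|Λ|^{-γ-λ}`. Markov's inequality at level `|Λ|^{-λ}` finishes the proof.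
-/

open Finset
open scoped Classical

section SignedSums

variable {ι : Type*}

def boolSign (b : Bool) : ℝ := if b then -1 else 1

theorem sum_ite_false_sub_sum_ite_true (s : Finset ι) (b : ι → Bool) (μ : ι → ℝ) :
    (∑ i ∈ s, if b i = false then μ i else 0) - (∑ i ∈ s, if b i = true then μ i else 0)
      = ∑ i ∈ s, μ i * boolSign (b i) := by
  rw [← sum_sub_distrib]
  refine sum_congr rfl fun i _ => ?_
  cases b i <;> simp [boolSign]

theorem card_filter_false_sub_card_filter_true (s : Finset ι) (b : ι → Bool) :
    (#(s.filter (fun i => b i = false)) : ℝ) - #(s.filter (fun i => b i = true))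
      = ∑ i ∈ s, boolSign (b i) := by
  rw [natCast_card_filter, natCast_card_filter, sum_ite_false_sub_sum_ite_true]
  simp only [one_mul]

end SignedSums

section WeightedSums

variable {β : Type*} [Fintype β]

theorem sum_mul_max_zero_le {w h : β → ℝ} {m D : ℝ} (hm : 0 ≤ m) (hwm : ∀ y, w y ≤ m)
    (hh : ∀ B : Finset β, ∑ y ∈ B, h y ≤ D) :
    ∑ y, w y * max (h y) 0 ≤ m * D :=
  calc ∑ y, w y * max (h y) 0 ≤ ∑ y, m * max (h y) 0 :=
        sum_le_sum fun y _ => mul_le_mul_of_nonneg_right (hwm y) (le_max_right _ _)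
    _ = m * ∑ y ∈ univ.filter (fun y => 0 < h y), h y := by
        rw [← mul_sum, sum_filter]
        congr 1
        refine sum_congr rfl fun y _ => ?_
        split_ifs with hy
        · exact max_eq_left hy.le
        · exact max_eq_right (not_lt.mp hy)
    _ ≤ m * D := mul_le_mul_of_nonneg_left (hh _) hm

theorem sum_mul_le {w h : β → ℝ} {m D : ℝ} (hw : ∀ y, 0 ≤ w y) (hm : 0 ≤ m)
    (hwm : ∀ y, w y ≤ m) (hh : ∀ B : Finset β, ∑ y ∈ B, h y ≤ D) :
    ∑ y, w y * h y ≤ m * D :=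
  (sum_le_sum fun y _ => mul_le_mul_of_nonneg_left (le_max_left _ _) (hw y)).trans
    (sum_mul_max_zero_le hm hwm hh)

theorem abs_sum_mul_le {w h : β → ℝ} {m D : ℝ} (hw : ∀ y, 0 ≤ w y) (hm : 0 ≤ m)
    (hwm : ∀ y, w y ≤ m) (hh : ∀ B : Finset β, |∑ y ∈ B, h y| ≤ D) :
    |∑ y, w y * h y| ≤ m * D := by
  refine abs_le.mpr ⟨?_, sum_mul_le hw hm hwm fun B => (le_abs_self _).trans (hh B)⟩
  have := sum_mul_le (h := fun y => -h y) hw hm hwm fun B => by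
    rw [sum_neg_distrib]; exact (neg_le_abs _).trans (hh B)
  simp only [mul_neg, sum_neg_distrib] at this
  linarith

theorem sum_mul_abs_le {w h : β → ℝ} {m D : ℝ} (hm : 0 ≤ m) (hwm : ∀ y, w y ≤ m)
    (hh : ∀ B : Finset β, |∑ y ∈ B, h y| ≤ D) :
    ∑ y, w y * |h y| ≤ 2 * m * D := by
  have hpos := sum_mul_max_zero_le hm hwm fun B => (le_abs_self _).trans (hh B)
  have hneg := sum_mul_max_zero_le (h := fun y => -h y) hm hwm fun B => by
    rw [sum_neg_distrib]; exact (neg_le_abs _).trans (hh B)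
  simp only [← max_zero_add_max_neg_zero_eq_abs_self, mul_add, sum_add_distrib]
  linarith

theorem sum_filter_lt_of_sum_mul_le {μ F : β → ℝ} {c B : ℝ} (hμ : ∀ y, 0 ≤ μ y)
    (hF : ∀ y, 0 ≤ F y) (hc : 0 < c) (hB : 0 < B) (hsum : ∑ y, μ y * F y ≤ B * c) :
    ∑ y ∈ univ.filter (fun y => c < F y), μ y < B := by
  set S := univ.filter (fun y => c < F y)
  by_cases hS : ∀ y ∈ S, μ y = 0
  · rwa [sum_eq_zero hS]
  push Not at hS
  obtain ⟨y₀, hy₀S, hy₀⟩ := hS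
  have hstrict : (∑ y ∈ S, μ y) * c < ∑ y ∈ S, μ y * F y := by
    rw [sum_mul]
    refine sum_lt_sum (fun y hy => mul_le_mul_of_nonneg_left (mem_filter.mp hy).2.le (hμ y))
      ⟨y₀, hy₀S, mul_lt_mul_of_pos_left (mem_filter.mp hy₀S).2 ((hμ y₀).lt_of_ne' hy₀)⟩
  have hsub : ∑ y ∈ S, μ y * F y ≤ ∑ y, μ y * F y :=
    sum_le_sum_of_subset_of_nonneg (subset_univ S) fun y _ _ => mul_nonneg (hμ y) (hF y)
  exact lt_of_mul_lt_mul_right (hstrict.trans_le (hsub.trans hsum)) hc.le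

end WeightedSums

theorem two_mul_two_rpow_neg_le {N a k : ℝ} (hN : 0 < N) (hk : a * Real.logb 2 N + 1 ≤ k) :
    2 * (2 : ℝ) ^ (-k) ≤ N ^ (-a) :=
  calc 2 * (2 : ℝ) ^ (-k) = 2 ^ (1 - k) := by
        rw [Real.rpow_sub two_pos, Real.rpow_one, Real.rpow_neg zero_le_two, div_eq_mul_inv]
    _ ≤ 2 ^ (Real.logb 2 N * -a) := Real.rpow_le_rpow_of_exponent_le one_le_two (by linarith)
    _ = N ^ (-a) := by rw [Real.rpow_mul zero_le_two, Real.rpow_logb two_pos (by norm_num) hN]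

theorem stmt_8_general {Λ : Type*} [Fintype Λ] [Nonempty Λ] (η γ lam : ℝ)
    (g : Λ → Λ → Bool)
    (hdisc : ∀ A B : Finset Λ,
      |(((A ×ˢ B).filter (fun p => g p.1 p.2 = false)).card : ℝ)
          - (((A ×ˢ B).filter (fun p => g p.1 p.2 = true)).card : ℝ)|
        / ((Fintype.card Λ : ℝ) ^ 2)
        ≤ (Fintype.card Λ : ℝ) ^ (-η))
    (μX μY : Λ → ℝ) (hX0 : ∀ x, 0 ≤ μX x)
    (hY0 : ∀ y, 0 ≤ μY y)
    (kX kY : ℝ) (hkX : ∀ x, μX x ≤ (2 : ℝ) ^ (-kX)) (hkY : ∀ y, μY y ≤ (2 : ℝ) ^ (-kY))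
    (hk : (2 - η + γ + lam) * Real.logb 2 (Fintype.card Λ) + 1 ≤ kX + kY) :
    ∑ x ∈ univ.filter (fun x =>
        (Fintype.card Λ : ℝ) ^ (-lam) <
          |(∑ y, if g x y = false then μY y else 0) - ∑ y, if g x y = true then μY y else 0|),
      μX x < (Fintype.card Λ : ℝ) ^ (-γ) := by
  set N : ℝ := (Fintype.card Λ : ℝ)
  have hN : 0 < N := by positivity
  set D := N ^ 2 * N ^ (-η)
  set f : Λ → ℝ := fun x => ∑ y, μY y * boolSign (g x y)
  have hrect : ∀ A B : Finset Λ, |∑ x ∈ A, ∑ y ∈ B, boolSign (g x y)| ≤ D := fun A B => by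
    have := hdisc A B
    rwa [card_filter_false_sub_card_filter_true, sum_product, div_le_iff₀ (by positivity),
      mul_comm] at this
  have hrow : ∀ A : Finset Λ, |∑ x ∈ A, f x| ≤ 2 ^ (-kY) * D := fun A => by
    simp only [f, sum_comm (s := A), ← mul_sum]
    exact abs_sum_mul_le hY0 (by positivity) hkY fun B => by rw [sum_comm]; exact hrect A B
  have hmass : ∑ x, μX x * |f x| ≤ 2 * 2 ^ (-kX) * (2 ^ (-kY) * D) :=
    sum_mul_abs_le (by positivity) hkX hrow
  have hnum : 2 * 2 ^ (-kX) * (2 ^ (-kY) * D) ≤ N ^ (-γ) * N ^ (-lam) := by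
    have h2k := two_mul_two_rpow_neg_le hN hk
    calc 2 * 2 ^ (-kX) * (2 ^ (-kY) * D) = 2 * (2 : ℝ) ^ (-(kX + kY)) * D := by
          rw [neg_add, Real.rpow_add two_pos]; ring
      _ ≤ N ^ (-(2 - η + γ + lam)) * D := by gcongr
      _ = N ^ (-γ) * N ^ (-lam) := by
          simp only [D, ← Real.rpow_two, ← Real.rpow_add hN]; ring_nf
  simp only [sum_ite_false_sub_sum_ite_true]
  exact sum_filter_lt_of_sum_mul_le hX0 (fun _ => abs_nonneg _) (by positivity) (by positivity)
    (hmass.trans hnum)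

/-- Sampling property of low-discrepancy gadgets: with high probability `X` takes a value `x`
for which `bias(g(x,Y))` is small. -/
theorem stmt_8 {Λ : Type*} [Fintype Λ] [Nonempty Λ] (η γ lam : ℝ)
    (hη : 0 < η) (hγ : 0 < γ) (hlam : 0 < lam)
    (g : Λ → Λ → Bool)
    (hdisc : ∀ A B : Finset Λ,
      |(((A ×ˢ B).filter (fun p => g p.1 p.2 = false)).card : ℝ)
          - (((A ×ˢ B).filter (fun p => g p.1 p.2 = true)).card : ℝ)|
        / ((Fintype.card Λ : ℝ) ^ 2)
        ≤ (Fintype.card Λ : ℝ) ^ (-η))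
    (μX μY : Λ → ℝ) (hX0 : ∀ x, 0 ≤ μX x) (hX1 : ∑ x, μX x = 1)
    (hY0 : ∀ y, 0 ≤ μY y) (hY1 : ∑ y, μY y = 1)
    (kX kY : ℝ) (hkX : ∀ x, μX x ≤ (2 : ℝ) ^ (-kX)) (hkY : ∀ y, μY y ≤ (2 : ℝ) ^ (-kY))
    (hk : (2 - η + γ + lam) * Real.logb 2 (Fintype.card Λ) + 1 ≤ kX + kY) :
    ∑ x ∈ univ.filter (fun x =>
        (Fintype.card Λ : ℝ) ^ (-lam) <
          |(∑ y, if g x y = false then μY y else 0) - ∑ y, if g x y = true then μY y else 0|),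
      μX x < (Fintype.card Λ : ℝ) ^ (-γ) :=
  stmt_8_general η γ lam g hdisc μX μY hX0 hY0 kX kY hkX hkY hk
end

section
/- (Non-biasing implies non-leaking) Let Y be a random variable over Λ^n (|Λ| = 2^b, n ≥ 2) and let x ∈ Λ^n be such that for every non-empty S ⊆ [n], bias(g^{⊕S}(x_S, Y_S)) ≤ (1/2)·(2n)^{-|S|}. Then x is not leaking for Y: for every I ⊆ [n] and every z_I ∈ {0,1}^I, Pr[g^I(x_I, Y_I) = z_I] ≥ 2^{-|I|-1}. -/
/-!
Expand the indicator of the event `g^I(x_I, Y_I) = z_I` in the characters `(-1)^{⊕_{i∈S} bᵢ}`,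
`S ⊆ I`: its probability is `2^{-|I|} ∑_{S ⊆ I} ± bias_S`. The term `S = ∅` contributes `1`, and
the hypothesis bounds the others by `½ ∑_{∅ ≠ S ⊆ I} (2n)^{-|S|} = ½((1 + 1/(2n))^{|I|} - 1) ≤ ½`.
-/

open Finset

section XorBias

variable {Ω ι : Type*}

section Parity

variable {R : Type*} [CommRing R]

theorem neg_one_pow_card_filter (S : Finset ι) (p : ι → Bool) :
    (-1 : R) ^ #{i ∈ S | p i = true} = ∏ i ∈ S, if p i = true then -1 else 1 := by
  rw [prod_ite, prod_const, prod_const_one, mul_one]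

theorem sum_powerset_neg_one_pow_mul_neg_one_pow (I : Finset ι) (a z : ι → Bool) :
    ∑ S ∈ I.powerset, (-1 : R) ^ #{i ∈ S | z i = true} * (-1) ^ #{i ∈ S | a i = true}
      = if ∀ i ∈ I, a i = z i then 2 ^ #I else 0 := by
  have hterm : ∀ S : Finset ι, (-1 : R) ^ #{i ∈ S | z i = true} * (-1) ^ #{i ∈ S | a i = true}
      = ∏ i ∈ S, if a i = z i then 1 else -1 := by
    intro S
    rw [neg_one_pow_card_filter, neg_one_pow_card_filter, ← prod_mul_distrib]
    refine prod_congr rfl fun i _ => ?_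
    cases a i <;> cases z i <;> simp
  calc ∑ S ∈ I.powerset, (-1 : R) ^ #{i ∈ S | z i = true} * (-1) ^ #{i ∈ S | a i = true}
      = ∏ i ∈ I, (1 + if a i = z i then 1 else -1) := by
        simp only [hterm, prod_one_add]
    _ = ∏ i ∈ I, if a i = z i then 2 else 0 := by
        refine prod_congr rfl fun i _ => ?_
        split_ifs <;> norm_num
    _ = if ∀ i ∈ I, a i = z i then 2 ^ #I else 0 := by
        rw [prod_ite_zero, prod_const]

end Parity

theorem sum_powerset_pow_card {R : Type*} [CommSemiring R] (I : Finset ι) (t : R) :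
    ∑ S ∈ I.powerset, t ^ #S = (1 + t) ^ #I := by
  rw [← prod_const, prod_one_add]
  simp only [prod_const]

variable [Fintype Ω]

/-- `f w i` is the `i`-th bit at the outcome `w` and `μ` its mass function, so `xorBias μ f S` is
the signed bias `E[(-1)^{⊕_{i∈S} f i}]`. -/
def xorBias (μ : Ω → ℝ) (f : Ω → ι → Bool) (S : Finset ι) : ℝ :=
  ∑ w, μ w * (-1) ^ #{i ∈ S | f w i = true}

theorem xorBias_eq_sub (μ : Ω → ℝ) (f : Ω → ι → Bool) (S : Finset ι) :
    xorBias μ f S = ∑ w with #{i ∈ S | f w i = true} % 2 = 0, μ w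
      - ∑ w with #{i ∈ S | f w i = true} % 2 = 1, μ w := by
  rw [sum_filter, sum_filter, ← sum_sub_distrib, xorBias]
  refine sum_congr rfl fun w _ => ?_
  rw [neg_one_pow_eq_pow_mod_two]
  rcases Nat.mod_two_eq_zero_or_one #{i ∈ S | f w i = true} with h | h <;> simp [h]

theorem xorBias_empty (μ : Ω → ℝ) (f : Ω → ι → Bool) : xorBias μ f ∅ = ∑ w, μ w := by
  simp [xorBias]

theorem two_pow_card_mul_sum_filter_eq (μ : Ω → ℝ) (f : Ω → ι → Bool) (I : Finset ι)
    (z : ι → Bool) :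
    2 ^ #I * ∑ w with ∀ i ∈ I, f w i = z i, μ w
      = ∑ S ∈ I.powerset, (-1) ^ #{i ∈ S | z i = true} * xorBias μ f S := by
  simp only [xorBias, mul_sum]
  rw [sum_comm, sum_filter]
  refine sum_congr rfl fun w _ => ?_
  have hexpand := sum_powerset_neg_one_pow_mul_neg_one_pow (R := ℝ) I (f w) z
  calc (if ∀ i ∈ I, f w i = z i then 2 ^ #I * μ w else 0)
      = μ w * ∑ S ∈ I.powerset,
          (-1) ^ #{i ∈ S | z i = true} * (-1) ^ #{i ∈ S | f w i = true} := by
        rw [hexpand]; split_ifs <;> ring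
    _ = _ := by rw [mul_sum]; exact sum_congr rfl fun S _ => by ring

theorem one_sub_le_two_pow_card_mul_sum_filter_of_abs_xorBias_le [DecidableEq ι] {μ : Ω → ℝ}
    (hμ : ∑ w, μ w = 1) (f : Ω → ι → Bool) (I : Finset ι) (z : ι → Bool) {c t : ℝ}
    (hbias : ∀ S ⊆ I, S.Nonempty → |xorBias μ f S| ≤ c * t ^ #S) :
    1 - c * ((1 + t) ^ #I - 1) ≤ 2 ^ #I * ∑ w with ∀ i ∈ I, f w i = z i, μ w := by
  have hempty := empty_mem_powerset I
  have hgeom : ∑ S ∈ I.powerset.erase ∅, t ^ #S = (1 + t) ^ #I - 1 := by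
    rw [← sum_powerset_pow_card, ← add_sum_erase _ _ hempty, card_empty, pow_zero,
      add_sub_cancel_left]
  have htail : ∑ S ∈ I.powerset.erase ∅, -(c * t ^ #S)
      ≤ ∑ S ∈ I.powerset.erase ∅, (-1) ^ #{i ∈ S | z i = true} * xorBias μ f S := by
    refine sum_le_sum fun S hS => ?_
    obtain ⟨hne, hsub⟩ := mem_erase.1 hS
    have := hbias S (mem_powerset.1 hsub) (nonempty_iff_ne_empty.2 hne)
    calc -(c * t ^ #S) ≤ -|(-1) ^ #{i ∈ S | z i = true} * xorBias μ f S| := by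
          rwa [neg_le_neg_iff, abs_mul, abs_pow, abs_neg, abs_one, one_pow, one_mul]
      _ ≤ _ := neg_abs_le _
  rw [two_pow_card_mul_sum_filter_eq, ← add_sum_erase _ _ hempty, filter_empty, card_empty,
    pow_zero, one_mul, xorBias_empty, hμ, ← hgeom, mul_sum]
  rw [sum_neg_distrib] at htail
  linarith

theorem one_add_inv_two_mul_pow_le_two (n : ℕ) : (1 + (2 * n : ℝ)⁻¹) ^ n ≤ 2 := by
  set t : ℝ := (2 * n)⁻¹ with ht
  have hnt : n * t ≤ 1 / 2 := by
    rcases n.eq_zero_or_pos with rfl | hn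
    · norm_num
    · exact le_of_eq (by rw [ht]; field_simp)
  have hexp_half : Real.exp (1 / 2) < 2 := by
    have h : Real.exp (1 / 2) ^ 2 = Real.exp 1 := by rw [← Real.exp_nat_mul]; norm_num
    nlinarith [Real.exp_one_lt_d9, Real.exp_pos (1 / 2)]
  calc (1 + t) ^ n ≤ Real.exp t ^ n :=
        pow_le_pow_left₀ (by positivity) (by linarith [Real.add_one_le_exp t]) n
    _ = Real.exp (n * t) := (Real.exp_nat_mul t n).symm
    _ ≤ Real.exp (1 / 2) := Real.exp_le_exp.2 hnt
    _ ≤ 2 := hexp_half.le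

end XorBias

theorem stmt_13_general (n : ℕ) {Λ : Type*} [Fintype Λ]
    (g : Λ → Λ → Bool)
    (μ : (Fin n → Λ) → ℝ) (hsum : ∑ z, μ z = 1)
    (x : Fin n → Λ)
    (hb : ∀ S : Finset (Fin n), S.Nonempty →
      |(∑ w ∈ univ.filter (fun w => (S.filter (fun i => g (x i) (w i) = true)).card % 2 = 0), μ w)
          - ∑ w ∈ univ.filter
              (fun w => (S.filter (fun i => g (x i) (w i) = true)).card % 2 = 1), μ w|
        ≤ (1 / 2 : ℝ) * ((2 * n : ℝ)) ^ (-(S.card : ℤ))) :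
    ∀ I : Finset (Fin n), ∀ zI : Fin n → Bool,
      (2 : ℝ) ^ (-(I.card : ℝ) - 1)
        ≤ ∑ w ∈ univ.filter (fun w => ∀ i ∈ I, g (x i) (w i) = zI i), μ w := by
  intro I zI
  have hbias := one_sub_le_two_pow_card_mul_sum_filter_of_abs_xorBias_le hsum
    (fun w i => g (x i) (w i)) I zI (c := 1 / 2) (t := (2 * n)⁻¹) fun S _ hS => by
      simpa only [xorBias_eq_sub, zpow_neg, zpow_natCast, inv_pow] using hb S hS
  have hgrowth : (1 + (2 * n : ℝ)⁻¹) ^ #I ≤ 2 :=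
    (pow_le_pow_right₀ (by simp) (I.card_le_univ.trans_eq (Fintype.card_fin n))).trans
      (one_add_inv_two_mul_pow_le_two n)
  have hrpow : (2 : ℝ) ^ (-(#I : ℝ) - 1) = (2 ^ #I)⁻¹ * (1 / 2) := by
    rw [Real.rpow_sub two_pos, Real.rpow_neg two_pos.le, Real.rpow_natCast, Real.rpow_one,
      div_eq_mul_one_div]
  rw [hrpow, inv_mul_le_iff₀ (by positivity)]
  -- `convert` reconciles the statement's `Nat.decidableForallFin` with `decidableDforallFinset`.
  convert hbias.trans' (by linarith : (1 : ℝ) / 2 ≤ _) using 4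

/-- Non-biasing implies non-leaking: if all XOR-biases `bias(g^{⊕S}(x_S, Y_S))` are at most
`(1/2)·(2n)^{-|S|}`, then `Pr[g^I(x_I, Y_I) = z_I] ≥ 2^{-|I|-1}` for all `I, z_I`. -/
theorem stmt_13 (n b : ℕ) (hn : 2 ≤ n) {Λ : Type*} [Fintype Λ] [DecidableEq Λ]
    (hcard : Fintype.card Λ = 2 ^ b)
    (g : Λ → Λ → Bool)
    (μ : (Fin n → Λ) → ℝ) (hnn : ∀ z, 0 ≤ μ z) (hsum : ∑ z, μ z = 1)
    (x : Fin n → Λ)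
    (hb : ∀ S : Finset (Fin n), S.Nonempty →
      |(∑ w ∈ univ.filter (fun w => (S.filter (fun i => g (x i) (w i) = true)).card % 2 = 0), μ w)
          - ∑ w ∈ univ.filter
              (fun w => (S.filter (fun i => g (x i) (w i) = true)).card % 2 = 1), μ w|
        ≤ (1 / 2 : ℝ) * ((2 * n : ℝ)) ^ (-(S.card : ℤ))) :
    ∀ I : Finset (Fin n), ∀ zI : Fin n → Bool,
      (2 : ℝ) ^ (-(I.card : ℝ) - 1)
        ≤ ∑ w ∈ univ.filter (fun w => ∀ i ∈ I, g (x i) (w i) = zI i), μ w :=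
  stmt_13_general n g μ hsum x hb
end
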